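/- The group Q₈ = { g(1,β,γ) ∈ Q } is isomorphic to the quaternion group of order 8. -/

import Mathlib

/-!
Let `ω ∈ 𝔽₄` be a primitive cube root of unity. The elements `A = g(1,1,ω)` and `B = g(1,ω,ω)`
of `Q₈` satisfy the quaternion relations `A⁴ = 1`, `B² = A²`, `ABA = B`, so they define a
homomorphism from the quaternion group of order 8 onto `⟨A, B⟩`. It is injective because
`A² ≠ 1` and every nontrivial subgroup of the quaternion group contains its central involution.
It is onto because `Q₈` has at most 8 elements: for each of the 4 values of `β`, the equation
`γ² + γ = β³` has at most two solutions.
-/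

noncomputable def gmat (α β γ : GaloisField 2 2) : Matrix (Fin 3) (Fin 3) (GaloisField 2 2) :=
  !![α, β, γ; 0, α^2, β^2; 0, 0, α]

/-- The subset `Q₈` of `Q`, consisting of elements with `α = 1`. -/
def Q8set : Set (GL (Fin 3) (GaloisField 2 2)) :=
  {M | ∃ β γ : GaloisField 2 2,
    (M : Matrix (Fin 3) (Fin 3) (GaloisField 2 2)) = gmat 1 β γ ∧
    γ ^ 2 + γ = β ^ 3}

namespace ZMod

variable {G : Type*} [Group G] {m : ℕ} {a : G}

lemma pow_val_natCast (ha : a ^ m = 1) (k : ℕ) : a ^ (k : ZMod m).val = a ^ k := by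
  rw [val_natCast, ← pow_eq_pow_mod _ ha]

variable [NeZero m]

lemma pow_val_add (ha : a ^ m = 1) (i j : ZMod m) : a ^ (i + j).val = a ^ i.val * a ^ j.val := by
  rw [val_add, ← pow_eq_pow_mod _ ha, pow_add]

lemma pow_val_neg (ha : a ^ m = 1) (i : ZMod m) : a ^ (-i).val = (a ^ i.val)⁻¹ :=
  eq_inv_of_mul_eq_one_left <| by rw [← pow_val_add ha, neg_add_cancel, val_zero, pow_zero]

end ZMod

namespace QuaternionGroup

variable {G : Type*} [Group G] {n : ℕ}

def lift [NeZero n] (a b : G) (ha : a ^ (2 * n) = 1) (hb : b ^ 2 = a ^ n)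
    (hab : a * b * a = b) : QuaternionGroup n →* G where
  toFun
    | .a i => a ^ i.val
    | .xa i => b * a ^ i.val
  map_one' := by
    show a ^ (0 : ZMod (2 * n)).val = 1
    rw [ZMod.val_zero, pow_zero]
  map_mul' := by
    have hconj (i : ZMod (2 * n)) : a ^ i.val * b = b * a ^ (-i).val := by
      have h : SemiconjBy b a⁻¹ a := by rw [SemiconjBy, mul_inv_eq_iff_eq_mul, hab]
      rw [ZMod.pow_val_neg ha, ← inv_pow, (h.pow_right _).eq]
    rintro (i | i) (j | j)
    · simp only [a_mul_a, ZMod.pow_val_add ha]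
    · simp only [a_mul_xa]
      rw [← mul_assoc, hconj, mul_assoc, sub_eq_neg_add, ZMod.pow_val_add ha]
    · simp only [xa_mul_a, ZMod.pow_val_add ha, mul_assoc]
    · simp only [xa_mul_xa]
      rw [mul_assoc, ← mul_assoc _ b, hconj, ← mul_assoc, ← mul_assoc, ← sq, hb, mul_assoc,
        add_sub_assoc, sub_eq_neg_add, ZMod.pow_val_add ha, ZMod.pow_val_add ha,
        ZMod.pow_val_natCast ha]

/-- `a 2` is the only element of order 2, and every other nontrivial element squares to it. -/
lemma injective_of_map_a_two_ne_one (f : QuaternionGroup 2 →* G) (h : f (a 2) ≠ 1) :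
    Function.Injective f := by
  have key : ∀ x : QuaternionGroup 2, x ≠ 1 → x = a 2 ∨ x ^ 2 = a 2 := by decide
  refine (injective_iff_map_eq_one f).2 fun x hx => by_contra fun hx1 => h ?_
  rcases key x hx1 with rfl | hsq
  · exact hx
  · rw [← hsq, map_pow, hx, one_pow]

end QuaternionGroup

section FieldCounting

variable {K : Type*} [Field K]

lemma exists_sq_add_self_add_one_eq_zero [Finite K] (hK : Nat.card K = 4) :
    ∃ ω : K, ω ^ 2 + ω + 1 = 0 := by
  classical
  have := Fintype.ofFinite K
  obtain ⟨x, -, hx⟩ : ∃ x ∈ Finset.univ, x ∉ ({0, 1} : Finset K) :=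
    Finset.exists_mem_notMem_of_card_lt_card <| by
      rw [Finset.card_univ, ← Nat.card_eq_fintype_card, hK]
      exact (Finset.card_le_two (a := (0 : K)) (b := 1)).trans_lt (by norm_num)
  simp only [Finset.mem_insert, Finset.mem_singleton, not_or] at hx
  have hx4 : x ^ 4 = x := by simpa [← Nat.card_eq_fintype_card, hK] using FiniteField.pow_card x
  refine ⟨x, (mul_eq_zero.mp ?_).resolve_left (mul_ne_zero hx.1 (sub_ne_zero.mpr hx.2))⟩
  linear_combination hx4

lemma ncard_sq_add_self_eq_le_two (c : K) : {γ : K | γ ^ 2 + γ = c}.ncard ≤ 2 := by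
  rcases Set.eq_empty_or_nonempty {γ : K | γ ^ 2 + γ = c} with h | ⟨γ₀, hγ₀ : γ₀ ^ 2 + γ₀ = c⟩
  · simp [h]
  have hsub : {γ : K | γ ^ 2 + γ = c} ⊆ {γ₀, -1 - γ₀} := by
    intro γ (hγ : γ ^ 2 + γ = c)
    have : (γ - γ₀) * (γ - (-1 - γ₀)) = 0 := by linear_combination hγ - hγ₀
    simpa [sub_eq_zero] using this
  calc _ ≤ ({γ₀, -1 - γ₀} : Set K).ncard := Set.ncard_le_ncard hsub (Set.toFinite _)
    _ ≤ 2 := (Set.ncard_insert_le _ _).trans (by simp)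

lemma card_sq_add_self_eq_le_two_mul_card [Finite K] (g : K → K) :
    Nat.card {p : K × K // p.2 ^ 2 + p.2 = g p.1} ≤ 2 * Nat.card K := by
  have := Fintype.ofFinite K
  rw [Nat.card_congr (Equiv.subtypeProdEquivSigmaSubtype fun β γ => γ ^ 2 + γ = g β),
    Nat.card_sigma, Nat.card_eq_fintype_card, mul_comm, ← smul_eq_mul, ← Finset.card_univ]
  exact Finset.sum_le_card_nsmul _ _ _ fun β _ => ncard_sq_add_self_eq_le_two (g β)

end FieldCounting

local notation "𝔽₄" => GaloisField 2 2

@[simp]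
lemma gmat_apply_zero_one (α β γ : 𝔽₄) : gmat α β γ 0 1 = β := rfl

@[simp]
lemma gmat_apply_zero_two (α β γ : 𝔽₄) : gmat α β γ 0 2 = γ := rfl

lemma gmat_one_mul_gmat_one (β γ β' γ' : 𝔽₄) :
    gmat 1 β γ * gmat 1 β' γ' = gmat 1 (β + β') (γ + γ' + β * β' ^ 2) := by
  ext i j
  fin_cases i <;> fin_cases j <;>
    simp [gmat, Matrix.mul_apply, Fin.sum_univ_three, CharTwo.add_sq] <;> ring

lemma gmat_one_zero_zero : gmat 1 0 0 = 1 := by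
  simp [gmat, Matrix.one_fin_three]

noncomputable def gmatUnit (β γ : 𝔽₄) : GL (Fin 3) 𝔽₄ where
  val := gmat 1 β γ
  inv := gmat 1 β (γ + β ^ 3)
  val_inv := by
    rw [gmat_one_mul_gmat_one, CharTwo.add_self_eq_zero, ← gmat_one_zero_zero]
    congr 1
    linear_combination (γ + β ^ 3) * CharTwo.two_eq_zero (R := 𝔽₄)
  inv_val := by
    rw [gmat_one_mul_gmat_one, CharTwo.add_self_eq_zero, ← gmat_one_zero_zero]
    congr 1
    linear_combination (γ + β ^ 3) * CharTwo.two_eq_zero (R := 𝔽₄)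

@[simp]
lemma coe_gmatUnit (β γ : 𝔽₄) : (gmatUnit β γ : Matrix (Fin 3) (Fin 3) 𝔽₄) = gmat 1 β γ := rfl

lemma gmatUnit_mul (β γ β' γ' : 𝔽₄) :
    gmatUnit β γ * gmatUnit β' γ' = gmatUnit (β + β') (γ + γ' + β * β' ^ 2) :=
  Units.ext (gmat_one_mul_gmat_one β γ β' γ')

lemma gmatUnit_zero_zero : gmatUnit 0 0 = 1 := Units.ext gmat_one_zero_zero

lemma gmatUnit_inj {β γ β' γ' : 𝔽₄} : gmatUnit β γ = gmatUnit β' γ' ↔ β = β' ∧ γ = γ' := by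
  refine ⟨fun h => ?_, by rintro ⟨rfl, rfl⟩; rfl⟩
  have h' := congrArg Units.val h
  exact ⟨by simpa using congrFun (congrFun h' 0) 1, by simpa using congrFun (congrFun h' 0) 2⟩

lemma gmatUnit_sq (β γ : 𝔽₄) : gmatUnit β γ ^ 2 = gmatUnit 0 (β ^ 3) := by
  rw [sq, gmatUnit_mul, CharTwo.add_self_eq_zero]
  congr 1
  linear_combination γ * CharTwo.two_eq_zero (R := 𝔽₄)

lemma gmatUnit_one_mul_mul_gmatUnit_one (γ β δ : 𝔽₄) :
    gmatUnit 1 γ * gmatUnit β δ * gmatUnit 1 γ = gmatUnit β (δ + β ^ 2 + β + 1) := by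
  rw [gmatUnit_mul, gmatUnit_mul]
  congr 1
  · linear_combination CharTwo.two_eq_zero (R := 𝔽₄)
  · linear_combination γ * CharTwo.two_eq_zero (R := 𝔽₄)

lemma gmatUnit_mem_Q8set {β γ : 𝔽₄} (h : γ ^ 2 + γ = β ^ 3) : gmatUnit β γ ∈ Q8set :=
  ⟨β, γ, coe_gmatUnit β γ, h⟩

lemma card_Q8set_le : Nat.card Q8set ≤ 8 := by
  let entries : Q8set → {p : 𝔽₄ × 𝔽₄ // p.2 ^ 2 + p.2 = p.1 ^ 3} := fun M =>
    ⟨(((M : GL (Fin 3) 𝔽₄) : Matrix (Fin 3) (Fin 3) 𝔽₄) 0 1,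
      ((M : GL (Fin 3) 𝔽₄) : Matrix (Fin 3) (Fin 3) 𝔽₄) 0 2), by
      obtain ⟨β, γ, hM, hβγ⟩ := M.2
      simpa [hM] using hβγ⟩
  have hinj : Function.Injective entries := by
    rintro ⟨M, β, γ, hM, _⟩ ⟨M', β', γ', hM', _⟩ h
    simp only [entries, Subtype.mk.injEq, Prod.mk.injEq, hM, hM', gmat_apply_zero_one,
      gmat_apply_zero_two] at h
    obtain ⟨rfl, rfl⟩ := h
    exact Subtype.ext (Units.ext (hM.trans hM'.symm))
  calc Nat.card Q8set ≤ _ := Nat.card_le_card_of_injective entries hinj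
    _ ≤ 2 * Nat.card 𝔽₄ := card_sq_add_self_eq_le_two_mul_card _
    _ = 8 := by rw [GaloisField.card 2 2 two_ne_zero]; rfl


/-- `Q₈` is isomorphic to the quaternion group of order 8. -/
theorem stmt4 (HQ8 : Subgroup (GL (Fin 3) (GaloisField 2 2)))
    (hQ8 : (HQ8 : Set (GL (Fin 3) (GaloisField 2 2))) = Q8set) :
    Nonempty (HQ8 ≃* QuaternionGroup 2) := by
  obtain ⟨ω, hω⟩ := exists_sq_add_self_add_one_eq_zero (GaloisField.card 2 2 two_ne_zero)
  have two : (2 : 𝔽₄) = 0 := CharTwo.two_eq_zero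
  have hω3 : ω ^ 3 = 1 := by linear_combination (ω - 1) * hω
  have mem {β γ : 𝔽₄} (h : γ ^ 2 + γ = β ^ 3) : gmatUnit β γ ∈ HQ8 := by
    rw [← SetLike.mem_coe, hQ8]
    exact gmatUnit_mem_Q8set h
  let a : HQ8 := ⟨gmatUnit 1 ω, mem (by linear_combination hω - two)⟩
  let b : HQ8 := ⟨gmatUnit ω ω, mem (by linear_combination hω - hω3 - two)⟩
  have ha2 : ((a ^ 2 : HQ8) : GL (Fin 3) 𝔽₄) = gmatUnit 0 1 := by
    rw [Subgroup.coe_pow, gmatUnit_sq, one_pow]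
  have ha : a ^ (2 * 2) = 1 := Subtype.ext <| by
    rw [pow_mul, Subgroup.coe_pow, ha2, gmatUnit_sq, zero_pow three_ne_zero, OneMemClass.coe_one,
      gmatUnit_zero_zero]
  have hb : b ^ 2 = a ^ 2 := Subtype.ext <| by rw [ha2, Subgroup.coe_pow, gmatUnit_sq, hω3]
  have hab : a * b * a = b := Subtype.ext <| by
    rw [Subgroup.coe_mul, Subgroup.coe_mul, gmatUnit_one_mul_mul_gmatUnit_one]
    congr 1
    linear_combination hω
  let f := QuaternionGroup.lift a b ha hb hab
  have hinj : Function.Injective f := by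
    refine QuaternionGroup.injective_of_map_a_two_ne_one f fun h => one_ne_zero (α := 𝔽₄) ?_
    have h' : ((a ^ 2 : HQ8) : GL (Fin 3) 𝔽₄) = 1 := congrArg Subtype.val h
    rw [ha2, ← gmatUnit_zero_zero, gmatUnit_inj] at h'
    exact h'.2
  have hcard : Nat.card HQ8 ≤ Nat.card (QuaternionGroup 2) :=
    calc Nat.card HQ8 = Nat.card Q8set := Nat.card_congr (Equiv.setCongr hQ8)
      _ ≤ 8 := card_Q8set_le
      _ = Nat.card (QuaternionGroup 2) := by rw [Nat.card_eq_fintype_card, QuaternionGroup.card]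
  exact ⟨(MulEquiv.ofBijective f (hinj.bijective_of_nat_card_le hcard)).symm⟩
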